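/- arXiv:1310.0798 — 3 statements merged into one kernel-verified Lean document; each statement's English description precedes it below -/
import Mathlib

section
/- For a smooth solution r(t,x) of ∂_t r = γ⁻¹∂_x²𝛕(r) with ∂_x r(t,0)=0, 𝛕(r(t,1)) = τ̃(t), and initial tension profile 𝛕(r(0,·)) = τ₀ constant, the free energy–work balance holds: 𝓕(t) - 𝓕(0) = W(t) - γ⁻¹ ∫₀ᵗ ∫₀¹ (∂_x 𝛕(r(s,x)))² dx ds, where W(t) = γ⁻¹ ∫₀ᵗ τ̃(s) ∂_x 𝛕(r(s,1)) ds and 𝓕(t) = ∫₀¹ F(r(t,x)) dx with F' = 𝛕. In particular 𝓕(t) - 𝓕(0) ≤ W(t) (Clausius inequality). -/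
open Real MeasureTheory intervalIntegral

lemma hasDerivAt_slice_right {G : ℝ × ℝ → ℝ} (hG : ContDiff ℝ (⊤ : ℕ∞) G) (s x : ℝ) :
    HasDerivAt (fun y => G (s, y)) (fderiv ℝ G (s, x) (0, 1)) x := by
  have h := (hG.differentiable (by simp) (s, x)).hasFDerivAt
  have h2 : HasDerivAt (fun y : ℝ => ((s, y) : ℝ × ℝ)) ((0 : ℝ), (1 : ℝ)) x :=
    (hasDerivAt_const x s).prodMk (hasDerivAt_id x)
  exact h.comp_hasDerivAt x h2

lemma hasDerivAt_slice_left {G : ℝ × ℝ → ℝ} (hG : ContDiff ℝ (⊤ : ℕ∞) G) (s x : ℝ) :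
    HasDerivAt (fun τ => G (τ, x)) (fderiv ℝ G (s, x) (1, 0)) s := by
  have h := (hG.differentiable (by simp) (s, x)).hasFDerivAt
  have h2 : HasDerivAt (fun τ : ℝ => ((τ, x) : ℝ × ℝ)) ((1 : ℝ), (0 : ℝ)) s :=
    (hasDerivAt_id s).prodMk (hasDerivAt_const s x)
  exact h.comp_hasDerivAt s h2

lemma contDiff_pderiv {G : ℝ × ℝ → ℝ} (hG : ContDiff ℝ (⊤ : ℕ∞) G) (v : ℝ × ℝ) :
    ContDiff ℝ (⊤ : ℕ∞) (fun q => fderiv ℝ G q v) :=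
  (hG.fderiv_right (by simp)).clm_apply contDiff_const

/-- Free energy–work balance and Clausius inequality: for a smooth solution of
`∂_t r = γ⁻¹∂_x²𝛕(r)` with `∂_x r(t,0) = 0`, `𝛕(r(t,1)) = τ̃(t)` and constant initial tension
profile `𝛕(r(0,·)) = τ₀`, one has
`𝓕(t) - 𝓕(0) = W(t) - γ⁻¹∫₀ᵗ∫₀¹(∂_x 𝛕(r(s,x)))² dx ds` with
`W(t) = γ⁻¹∫₀ᵗ τ̃(s) ∂_x 𝛕(r(s,·))|_{x=1} ds`, and in particular `𝓕(t) - 𝓕(0) ≤ W(t)`. -/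
theorem free_energy_work_balance
    (γ : ℝ) (hγ : 0 < γ)
    (tauOf : ℝ → ℝ) (htau : ContDiff ℝ (⊤ : ℕ∞) tauOf) (htau' : StrictMono tauOf)
    (F : ℝ → ℝ) (hF : ContDiff ℝ (⊤ : ℕ∞) F) (hF' : ∀ y, deriv F y = tauOf y)
    (τext : ℝ → ℝ) (hτext : ContDiff ℝ (⊤ : ℕ∞) τext)
    (τ₀ : ℝ)
    (r : ℝ → ℝ → ℝ)
    (hr : ContDiff ℝ (⊤ : ℕ∞) (fun q : ℝ × ℝ => r q.1 q.2))
    (hpde : ∀ t x, t ≥ 0 → x ∈ Set.Icc (0:ℝ) 1 →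
      deriv (fun s => r s x) t
        = γ⁻¹ * deriv (deriv (fun y => tauOf (r t y))) x)
    (hneu : ∀ t ≥ (0:ℝ), deriv (fun y => r t y) 0 = 0)
    (hdir : ∀ t ≥ (0:ℝ), tauOf (r t 1) = τext t)
    (hinit : ∀ x ∈ Set.Icc (0:ℝ) 1, tauOf (r 0 x) = τ₀)
    (t : ℝ) (ht : 0 ≤ t) :
    ((∫ x in (0:ℝ)..1, F (r t x)) - (∫ x in (0:ℝ)..1, F (r 0 x))
      = (γ⁻¹ * ∫ s in (0:ℝ)..t, τext s * deriv (fun y => tauOf (r s y)) 1)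
        - γ⁻¹ * ∫ s in (0:ℝ)..t, (∫ x in (0:ℝ)..1, (deriv (fun y => tauOf (r s y)) x) ^ 2)) ∧
    ((∫ x in (0:ℝ)..1, F (r t x)) - (∫ x in (0:ℝ)..1, F (r 0 x))
      ≤ γ⁻¹ * ∫ s in (0:ℝ)..t, τext s * deriv (fun y => tauOf (r s y)) 1) := by
  have hG : ContDiff ℝ (⊤ : ℕ∞) (fun q : ℝ × ℝ => tauOf (r q.1 q.2)) := htau.comp hr
  have hH : ContDiff ℝ (⊤ : ℕ∞) (fun q : ℝ × ℝ => F (r q.1 q.2)) := hF.comp hr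
  -- u = ∂_x (tauOf ∘ r)
  set u : ℝ → ℝ → ℝ :=
    fun s x => fderiv ℝ (fun q : ℝ × ℝ => tauOf (r q.1 q.2)) (s, x) (0, 1) with hu_def
  have hu : ∀ s x, HasDerivAt (fun y => tauOf (r s y)) (u s x) x := fun s x =>
    hasDerivAt_slice_right hG s x
  have hu_eq : ∀ s x, deriv (fun y => tauOf (r s y)) x = u s x := fun s x => (hu s x).deriv
  have hu_cd : ContDiff ℝ (⊤ : ℕ∞) (fun q : ℝ × ℝ => u q.1 q.2) := contDiff_pderiv hG _
  -- u2 = ∂_x u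
  set u2 : ℝ → ℝ → ℝ :=
    fun s x => fderiv ℝ (fun q : ℝ × ℝ => u q.1 q.2) (s, x) (0, 1) with hu2_def
  have hu2 : ∀ s x, HasDerivAt (fun y => u s y) (u2 s x) x := fun s x =>
    hasDerivAt_slice_right hu_cd s x
  have hu2_cont : Continuous (fun q : ℝ × ℝ => u2 q.1 q.2) := (contDiff_pderiv hu_cd _).continuous
  -- Rt = ∂_t r
  set Rt : ℝ → ℝ → ℝ :=
    fun s x => fderiv ℝ (fun q : ℝ × ℝ => r q.1 q.2) (s, x) (1, 0) with hRt_def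
  have hRt : ∀ s x, HasDerivAt (fun τ => r τ x) (Rt s x) s := fun s x =>
    hasDerivAt_slice_left hr s x
  -- Ht = ∂_t (F ∘ r)
  set Ht : ℝ → ℝ → ℝ :=
    fun s x => fderiv ℝ (fun q : ℝ × ℝ => F (r q.1 q.2)) (s, x) (1, 0) with hHt_def
  have hHt : ∀ s x, HasDerivAt (fun τ => F (r τ x)) (Ht s x) s := fun s x =>
    hasDerivAt_slice_left hH s x
  have hHt_cont : Continuous (fun q : ℝ × ℝ => Ht q.1 q.2) := (contDiff_pderiv hH _).continuous
  -- chain rule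
  have hchain : ∀ s x, Ht s x = tauOf (r s x) * Rt s x := by
    intro s x
    have h1 : HasDerivAt F (tauOf (r s x)) (r s x) := by
      have := ((hF.differentiable (by simp)) (r s x)).hasDerivAt
      rwa [hF'] at this
    exact (hHt s x).unique (h1.comp s (hRt s x))
  -- PDE restated
  have hpde' : ∀ s x, 0 ≤ s → x ∈ Set.Icc (0:ℝ) 1 → Rt s x = γ⁻¹ * u2 s x := by
    intro s x hs hx
    have h0 := hpde s x hs hx
    rw [(hRt s x).deriv] at h0
    have h1 : deriv (fun y => tauOf (r s y)) = fun y => u s y := funext fun y => hu_eq s y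
    rw [h1, (hu2 s x).deriv] at h0
    exact h0
  -- Neumann boundary condition for u
  have hneu' : ∀ s, 0 ≤ s → u s 0 = 0 := by
    intro s hs
    have hrx : HasDerivAt (fun y => r s y)
        (fderiv ℝ (fun q : ℝ × ℝ => r q.1 q.2) (s, 0) (0, 1)) 0 :=
      hasDerivAt_slice_right hr s 0
    have h0 : fderiv ℝ (fun q : ℝ × ℝ => r q.1 q.2) (s, 0) ((0:ℝ), (1:ℝ)) = 0 := by
      rw [← hrx.deriv]; exact hneu s hs
    have ht1 : HasDerivAt tauOf (deriv tauOf (r s 0)) (r s 0) :=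
      ((htau.differentiable (by simp)) (r s 0)).hasDerivAt
    have h1 : HasDerivAt (fun y => tauOf (r s y)) (deriv tauOf (r s 0) * 0) 0 := by
      have := ht1.comp 0 hrx
      rwa [h0] at this
    have := (hu s 0).unique h1
    simpa using this
  -- continuity facts
  have hucont : Continuous (fun q : ℝ × ℝ => u q.1 q.2) := hu_cd.continuous
  have huc1 : Continuous (fun s => u s 1) :=
    hucont.comp (continuous_id.prodMk continuous_const)
  have hus : ∀ s, Continuous (fun x => u s x) := fun s =>
    hucont.comp (Continuous.prodMk_right s)
  have hu2s : ∀ s, Continuous (fun x => u2 s x) := fun s =>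
    hu2_cont.comp (Continuous.prodMk_right s)
  have hGcont : Continuous (fun q : ℝ × ℝ => tauOf (r q.1 q.2)) := hG.continuous
  have hGs : ∀ s, Continuous (fun x => tauOf (r s x)) := fun s =>
    hGcont.comp (Continuous.prodMk_right s)
  -- derivative of the free energy
  have hΦ : ∀ s₀ : ℝ, HasDerivAt (fun s => ∫ x in (0:ℝ)..1, F (r s x))
      (∫ x in (0:ℝ)..1, Ht s₀ x) s₀ := by
    intro s₀
    obtain ⟨C, hC⟩ := IsCompact.exists_bound_of_continuousOn
      ((isCompact_Icc (a := s₀ - 1) (b := s₀ + 1)).prod (isCompact_Icc (a := (0:ℝ)) (b := 1)))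
      hHt_cont.continuousOn
    have hHs : ∀ s : ℝ, Continuous (fun x => F (r s x)) := fun s =>
      hH.continuous.comp (Continuous.prodMk_right s)
    have hHts : Continuous (fun x => Ht s₀ x) := hHt_cont.comp (Continuous.prodMk_right s₀)
    have key := intervalIntegral.hasDerivAt_integral_of_dominated_loc_of_deriv_le
      (F := fun s x => F (r s x)) (F' := fun s x => Ht s x) (x₀ := s₀)
      (a := (0:ℝ)) (b := 1) (μ := volume) (bound := fun _ => C) (s := Metric.ball s₀ 1) (Metric.ball_mem_nhds s₀ one_pos)
      (Filter.Eventually.of_forall fun s => (hHs s).aestronglyMeasurable)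
      ((hHs s₀).intervalIntegrable 0 1)
      hHts.aestronglyMeasurable
      (Filter.Eventually.of_forall fun x hx s hs => by
        apply hC (s, x)
        constructor
        · rw [Real.ball_eq_Ioo] at hs
          exact ⟨hs.1.le, hs.2.le⟩
        · rw [Set.uIoc_of_le (zero_le_one)] at hx
          exact Set.Ioc_subset_Icc_self hx)
      intervalIntegrable_const
      (Filter.Eventually.of_forall fun x _ s _ => hHt s x)
    exact key.2
  -- the derivative equals γ⁻¹ (τext s · u s 1 − ∫ u²) for s ≥ 0
  have hBint : ∀ s, 0 ≤ s → (∫ x in (0:ℝ)..1, Ht s x)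
      = γ⁻¹ * (τext s * u s 1 - ∫ x in (0:ℝ)..1, (u s x) ^ 2) := by
    intro s hs
    have e1 : ∀ x ∈ Set.uIcc (0:ℝ) 1, Ht s x = γ⁻¹ * (tauOf (r s x) * u2 s x) := by
      intro x hx
      rw [Set.uIcc_of_le zero_le_one] at hx
      rw [hchain s x, hpde' s x hs hx]; ring
    rw [intervalIntegral.integral_congr e1, intervalIntegral.integral_const_mul]
    congr 1
    have ibp := intervalIntegral.integral_deriv_mul_eq_sub_of_hasDerivAt
      (u := fun x => tauOf (r s x)) (v := fun x => u s x)
      (u' := fun x => u s x) (v' := fun x => u2 s x)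
      (hGs s).continuousOn (hus s).continuousOn
      (fun x _ => hu s x) (fun x _ => hu2 s x)
      ((hus s).intervalIntegrable 0 1) ((hu2s s).intervalIntegrable 0 1)
    have hsplit : (∫ x in (0:ℝ)..1, (u s x * u s x + tauOf (r s x) * u2 s x))
        = (∫ x in (0:ℝ)..1, u s x * u s x) + ∫ x in (0:ℝ)..1, tauOf (r s x) * u2 s x :=
      intervalIntegral.integral_add
        (((hus s).mul (hus s)).intervalIntegrable 0 1)
        (((hGs s).mul (hu2s s)).intervalIntegrable 0 1)
    rw [hsplit] at ibp
    have hsq : (∫ x in (0:ℝ)..1, u s x * u s x) = ∫ x in (0:ℝ)..1, (u s x) ^ 2 := by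
      apply intervalIntegral.integral_congr; intro x _; ring
    simp only [hdir s hs, hneu' s hs, mul_zero, sub_zero] at ibp
    rw [hsq] at ibp
    linarith
  -- FTC
  have hAcont : Continuous (fun s => τext s * u s 1) := hτext.continuous.mul huc1
  have hBcont : Continuous (fun s => ∫ x in (0:ℝ)..1, (u s x) ^ 2) := by
    have : Continuous (Function.uncurry fun s x => (u s x) ^ 2) := by
      exact (hucont.pow 2)
    exact intervalIntegral.continuous_parametric_intervalIntegral_of_continuous' this 0 1
  have hDcont : Continuous (fun s => γ⁻¹ * (τext s * u s 1 - ∫ x in (0:ℝ)..1, (u s x) ^ 2)) :=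
    continuous_const.mul (hAcont.sub hBcont)
  have hFTC : (∫ s in (0:ℝ)..t, γ⁻¹ * (τext s * u s 1 - ∫ x in (0:ℝ)..1, (u s x) ^ 2))
      = (∫ x in (0:ℝ)..1, F (r t x)) - (∫ x in (0:ℝ)..1, F (r 0 x)) := by
    apply intervalIntegral.integral_eq_sub_of_hasDerivAt
    · intro s hs
      rw [Set.uIcc_of_le ht] at hs
      have := hΦ s
      rwa [hBint s hs.1] at this
    · exact hDcont.intervalIntegrable 0 t
  have hsplit2 : (∫ s in (0:ℝ)..t, γ⁻¹ * (τext s * u s 1 - ∫ x in (0:ℝ)..1, (u s x) ^ 2))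
      = γ⁻¹ * (∫ s in (0:ℝ)..t, τext s * u s 1)
        - γ⁻¹ * ∫ s in (0:ℝ)..t, (∫ x in (0:ℝ)..1, (u s x) ^ 2) := by
    rw [intervalIntegral.integral_const_mul,
      intervalIntegral.integral_sub (hAcont.intervalIntegrable 0 t)
        (hBcont.intervalIntegrable 0 t)]
    ring
  have hmain : (∫ x in (0:ℝ)..1, F (r t x)) - (∫ x in (0:ℝ)..1, F (r 0 x))
      = γ⁻¹ * (∫ s in (0:ℝ)..t, τext s * u s 1)
        - γ⁻¹ * ∫ s in (0:ℝ)..t, (∫ x in (0:ℝ)..1, (u s x) ^ 2) := by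
    rw [← hsplit2, hFTC]
  have hdiss : 0 ≤ γ⁻¹ * ∫ s in (0:ℝ)..t, (∫ x in (0:ℝ)..1, (u s x) ^ 2) := by
    apply mul_nonneg (inv_nonneg.mpr hγ.le)
    apply intervalIntegral.integral_nonneg ht
    intro s _
    exact intervalIntegral.integral_nonneg zero_le_one fun x _ => sq_nonneg _
  simp only [hu_eq]
  exact ⟨hmain, by linarith⟩
end

section
/- Under the hypotheses of the quasistatic limit proposition (slowly driven diffusion with tension τ̃(εt)), the solution stays close to local equilibrium: lim_{ε→0} ∫₀¹ (r_ε(t,x) - 𝔯(τ̃(εt)))² dx = 0, uniformly over times t with εt ≥ t₁. -/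
open Real MeasureTheory intervalIntegral Filter Set

lemma qle_mvt_lower {f : ℝ → ℝ} (hf : Differentiable ℝ f) {C : ℝ}
    (h : ∀ y, C ≤ deriv f y) {x y : ℝ} (hxy : x ≤ y) : C * (y - x) ≤ f y - f x := by
  have hg : Monotone (fun z => f z - C * z) := by
    have hd : ∀ z : ℝ, HasDerivAt (fun z => f z - C * z) (deriv f z - C) z := by
      intro z
      exact ((hf z).hasDerivAt.sub ((hasDerivAt_id z).const_mul C)).congr_deriv (by ring)
    apply monotone_of_deriv_nonneg (fun z => (hd z).differentiableAt)
    intro z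
    rw [(hd z).deriv]
    linarith [h z]
  have := hg hxy
  simp only at this
  nlinarith

lemma qle_mvt_upper {f : ℝ → ℝ} (hf : Differentiable ℝ f) {C : ℝ}
    (h : ∀ y, deriv f y ≤ C) {x y : ℝ} (hxy : x ≤ y) : f y - f x ≤ C * (y - x) := by
  have h' : ∀ y, -C ≤ deriv (fun z => -f z) y := by
    intro z
    rw [deriv.fun_neg]
    linarith [h z]
  have := qle_mvt_lower hf.neg h' hxy
  simp only [Pi.neg_apply] at this
  nlinarith

/-- a function vanishing at `b`, with derivative `≥ 0` right of `b` and `≤ 0` left of `b`,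
is nonnegative. -/
lemma qle_nonneg_of_deriv (b : ℝ) (g G : ℝ → ℝ) (hg : ∀ a, HasDerivAt g (G a) a)
    (h1 : ∀ a, b ≤ a → 0 ≤ G a) (h2 : ∀ a, a ≤ b → G a ≤ 0) (hb : g b = 0) :
    ∀ a, 0 ≤ g a := by
  have hdiff : Differentiable ℝ g := fun a => (hg a).differentiableAt
  have hder : ∀ a, deriv g a = G a := fun a => (hg a).deriv
  intro a
  rcases le_total b a with h | h
  · have hm : MonotoneOn g (Set.Ici b) := by
      apply monotoneOn_of_deriv_nonneg (convex_Ici b) hdiff.continuous.continuousOn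
        (hdiff.differentiableOn)
      intro x hx
      rw [hder]
      exact h1 x (le_of_lt (by simpa [interior_Ici] using hx))
    have := hm (Set.self_mem_Ici) (by exact h) h
    linarith [hb ▸ this]
  · have hm : AntitoneOn g (Set.Iic b) := by
      apply antitoneOn_of_deriv_nonpos (convex_Iic b) hdiff.continuous.continuousOn
        (hdiff.differentiableOn)
      intro x hx
      rw [hder]
      exact h2 x (le_of_lt (by simpa [interior_Iic] using hx))
    have := hm (by exact h : a ∈ Set.Iic b) (Set.self_mem_Iic) h
    linarith [hb ▸ this]

/-- Quadratic sandwich for the free-energy integrand. -/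
lemma qle_sandwich {f : ℝ → ℝ} (hf : Differentiable ℝ f) {Cm Cp : ℝ}
    (hd : ∀ y, Cm ≤ deriv f y ∧ deriv f y ≤ Cp) (b a : ℝ) :
    Cm / 2 * (a - b) ^ 2 ≤ (∫ s in b..a, (f s - f b)) ∧
      (∫ s in b..a, (f s - f b)) ≤ Cp / 2 * (a - b) ^ 2 := by
  have hcont : Continuous fun s => f s - f b := (hf.continuous).sub continuous_const
  have hFTC : ∀ a : ℝ, HasDerivAt (fun u => ∫ s in b..u, (f s - f b)) (f a - f b) a := by
    intro a
    exact intervalIntegral.integral_hasDerivAt_right (hcont.intervalIntegrable _ _)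
      (hcont.stronglyMeasurableAtFilter _ _) hcont.continuousAt
  constructor
  · have := qle_nonneg_of_deriv b
      (fun a => (∫ s in b..a, (f s - f b)) - Cm / 2 * (a - b) ^ 2)
      (fun a => (f a - f b) - Cm * (a - b))
      (by
        intro a
        have h2 : HasDerivAt (fun a : ℝ => Cm / 2 * (a - b) ^ 2) (Cm * (a - b)) a := by
          have : HasDerivAt (fun a : ℝ => (a - b) ^ 2) (2 * (a - b)) a := by
            exact (((hasDerivAt_id a).sub_const b).pow 2).congr_deriv (by simp)
          have := this.const_mul (Cm / 2)
          exact this.congr_deriv (by ring)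
        exact (hFTC a).sub h2)
      (by intro a ha
          show (0:ℝ) ≤ f a - f b - Cm * (a - b)
          have := qle_mvt_lower hf (fun y => (hd y).1) ha; linarith)
      (by intro a ha
          show f a - f b - Cm * (a - b) ≤ (0:ℝ)
          have := qle_mvt_lower hf (fun y => (hd y).1) ha
          nlinarith)
      (by simp)
      a
    linarith
  · have := qle_nonneg_of_deriv b
      (fun a => Cp / 2 * (a - b) ^ 2 - (∫ s in b..a, (f s - f b)))
      (fun a => Cp * (a - b) - (f a - f b))
      (by
        intro a
        have h2 : HasDerivAt (fun a : ℝ => Cp / 2 * (a - b) ^ 2) (Cp * (a - b)) a := by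
          have : HasDerivAt (fun a : ℝ => (a - b) ^ 2) (2 * (a - b)) a := by
            exact (((hasDerivAt_id a).sub_const b).pow 2).congr_deriv (by simp)
          have := this.const_mul (Cp / 2)
          exact this.congr_deriv (by ring)
        exact h2.sub (hFTC a))
      (by intro a ha
          show (0:ℝ) ≤ Cp * (a - b) - (f a - f b)
          have := qle_mvt_upper hf (fun y => (hd y).2) ha; linarith)
      (by intro a ha
          show Cp * (a - b) - (f a - f b) ≤ (0:ℝ)
          have := qle_mvt_upper hf (fun y => (hd y).2) ha
          nlinarith)
      (by simp)
      a
    linarith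

/-- Lossy 1-D Poincaré inequality for functions vanishing at the right endpoint. -/
lemma qle_poincare {g : ℝ → ℝ} (hg : Differentiable ℝ g) (hg' : Continuous (deriv g))
    (h1 : g 1 = 0) :
    (∫ x in (0:ℝ)..1, (g x) ^ 2) ≤ 4 * ∫ x in (0:ℝ)..1, (deriv g x) ^ 2 := by
  have hgc : Continuous g := hg.continuous
  have hint2 : ∀ a b : ℝ, IntervalIntegrable (fun y => (g y) ^ 2) volume a b :=
    fun a b => ((hgc.pow 2).intervalIntegrable a b)
  have hint2' : ∀ a b : ℝ, IntervalIntegrable (fun y => (deriv g y) ^ 2) volume a b :=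
    fun a b => ((hg'.pow 2).intervalIntegrable a b)
  set A := ∫ x in (0:ℝ)..1, (g x) ^ 2 with hA
  set B := ∫ x in (0:ℝ)..1, (deriv g x) ^ 2 with hB
  have hBnn : 0 ≤ B := by
    rw [hB]
    apply intervalIntegral.integral_nonneg zero_le_one
    intro x _; positivity
  have hptw : ∀ x ∈ Set.Icc (0:ℝ) 1, (g x) ^ 2 ≤ 1 / 2 * A + 2 * B := by
    intro x hx
    have hFTC : (∫ y in x..1, (2 * g y * deriv g y)) = g 1 ^ 2 - g x ^ 2 := by
      apply intervalIntegral.integral_eq_sub_of_hasDerivAt (f := fun y => (g y) ^ 2)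
      · intro y _
        have := ((hg y).hasDerivAt).pow 2
        exact this.congr_deriv (by push_cast; ring)
      · exact ((continuous_const.mul hgc).mul hg').intervalIntegrable _ _
    have hkey : (g x) ^ 2 = ∫ y in x..1, (-(2 * g y * deriv g y)) := by
      rw [intervalIntegral.integral_neg, hFTC, h1]
      ring
    have hmono : (∫ y in x..1, (-(2 * g y * deriv g y)))
        ≤ ∫ y in x..1, (1 / 2 * (g y) ^ 2 + 2 * (deriv g y) ^ 2) := by
      apply intervalIntegral.integral_mono_on hx.2
        (((continuous_const.mul hgc).mul hg').neg.intervalIntegrable _ _)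
        (((continuous_const.mul (hgc.pow 2)).add
          (continuous_const.mul (hg'.pow 2))).intervalIntegrable _ _)
      intro y _
      show -(2 * g y * deriv g y) ≤ 1 / 2 * g y ^ 2 + 2 * deriv g y ^ 2
      nlinarith [sq_nonneg (g y + 2 * deriv g y)]
    have hsplit : (∫ y in x..1, (1 / 2 * (g y) ^ 2 + 2 * (deriv g y) ^ 2))
        = 1 / 2 * (∫ y in x..1, (g y) ^ 2) + 2 * ∫ y in x..1, (deriv g y) ^ 2 := by
      rw [intervalIntegral.integral_add ((hint2 x 1).const_mul _) ((hint2' x 1).const_mul _),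
        intervalIntegral.integral_const_mul, intervalIntegral.integral_const_mul]
    have hext : (∫ y in x..1, (g y) ^ 2) ≤ A := by
      rw [hA, ← intervalIntegral.integral_add_adjacent_intervals (hint2 0 x) (hint2 x 1)]
      have : 0 ≤ ∫ y in (0:ℝ)..x, (g y) ^ 2 := by
        apply intervalIntegral.integral_nonneg hx.1
        intro y _; positivity
      linarith
    have hext' : (∫ y in x..1, (deriv g y) ^ 2) ≤ B := by
      rw [hB, ← intervalIntegral.integral_add_adjacent_intervals (hint2' 0 x) (hint2' x 1)]
      have : 0 ≤ ∫ y in (0:ℝ)..x, (deriv g y) ^ 2 := by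
        apply intervalIntegral.integral_nonneg hx.1
        intro y _; positivity
      linarith
    calc (g x) ^ 2 = _ := hkey
      _ ≤ _ := hmono
      _ = _ := hsplit
      _ ≤ 1 / 2 * A + 2 * B := by
          have hAx : 0 ≤ (1:ℝ) / 2 := by norm_num
          nlinarith [hext, hext']
  have : A ≤ ∫ _x in (0:ℝ)..1, (1 / 2 * A + 2 * B) := by
    rw [hA]
    exact intervalIntegral.integral_mono_on zero_le_one (hint2 0 1)
      (intervalIntegrable_const) hptw
  simp [intervalIntegral.integral_const] at this
  linarith

lemma qle_slice (f : ℝ × ℝ → ℝ) (hf : ContDiff ℝ (⊤ : ℕ∞) f) :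
    (∀ t x : ℝ, HasDerivAt (fun s => f (s, x)) (fderiv ℝ f (t, x) (1, 0)) t) ∧
      Continuous (fun q : ℝ × ℝ => fderiv ℝ f q (1, 0)) ∧
      (∀ t : ℝ, ContDiff ℝ (⊤ : ℕ∞) (fun x => f (t, x))) ∧
      (∀ x : ℝ, ContDiff ℝ (⊤ : ℕ∞) (fun s => f (s, x))) := by
  refine ⟨?_, ?_, ?_, ?_⟩
  · intro t x
    have h1 : HasDerivAt (fun s : ℝ => (s, x)) ((1:ℝ), (0:ℝ)) t :=
      (hasDerivAt_id t).prodMk (hasDerivAt_const t x)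
    exact ((hf.differentiable (by simp) (t, x)).hasFDerivAt).comp_hasDerivAt t h1
  · exact (hf.continuous_fderiv (by simp)).clm_apply continuous_const
  · intro t
    exact hf.comp (contDiff_prodMk_right t)
  · intro x
    exact hf.comp (contDiff_prodMk_left x)

noncomputable def qleF (tauOf : ℝ → ℝ) : ℝ → ℝ := fun y => ∫ s in (0:ℝ)..y, tauOf s

lemma qleF_hasDeriv {tauOf : ℝ → ℝ} (h : Continuous tauOf) (y : ℝ) :
    HasDerivAt (qleF tauOf) (tauOf y) y :=
  intervalIntegral.integral_hasDerivAt_right (h.intervalIntegrable _ _)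
    (h.stronglyMeasurableAtFilter _ _) h.continuousAt

lemma qleF_sub {tauOf : ℝ → ℝ} (h : Continuous tauOf) (b a : ℝ) :
    qleF tauOf a - qleF tauOf b - tauOf b * (a - b) = ∫ s in b..a, (tauOf s - tauOf b) := by
  have h1 : qleF tauOf a - qleF tauOf b = ∫ s in b..a, tauOf s :=
    intervalIntegral.integral_interval_sub_left (h.intervalIntegrable _ _)
      (h.intervalIntegrable _ _)
  have h2 : (∫ s in b..a, (tauOf s - tauOf b))
      = (∫ s in b..a, tauOf s) - tauOf b * (a - b) := by
    rw [intervalIntegral.integral_sub (h.intervalIntegrable _ _) (intervalIntegrable_const),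
      intervalIntegral.integral_const]
    simp [smul_eq_mul]
    ring
  rw [h2, ← h1]

lemma qle_rEq_bound {tauOf rEq : ℝ → ℝ} {Cm : ℝ}
    (hτd : Differentiable ℝ tauOf) (hd1 : ∀ y, Cm ≤ deriv tauOf y)
    (hinv : ∀ τ, tauOf (rEq τ) = τ) (a b : ℝ) :
    Cm * |rEq a - rEq b| ≤ |a - b| := by
  rcases le_total (rEq b) (rEq a) with h | h
  · have h1 := qle_mvt_lower hτd hd1 h
    rw [hinv, hinv] at h1
    rw [abs_of_nonneg (by linarith : (0:ℝ) ≤ rEq a - rEq b)]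
    calc Cm * (rEq a - rEq b) ≤ a - b := h1
      _ ≤ |a - b| := le_abs_self _
  · have h1 := qle_mvt_lower hτd hd1 h
    rw [hinv, hinv] at h1
    rw [abs_of_nonpos (by linarith : rEq a - rEq b ≤ 0)]
    calc Cm * -(rEq a - rEq b) ≤ b - a := by linarith
      _ ≤ |a - b| := by rw [abs_sub_comm]; exact le_abs_self _
lemma qle_rEq_cont {tauOf rEq : ℝ → ℝ} {Cm : ℝ} (hCm : 0 < Cm)
    (hτd : Differentiable ℝ tauOf) (hd1 : ∀ y, Cm ≤ deriv tauOf y)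
    (hinv : ∀ τ, tauOf (rEq τ) = τ) : Continuous rEq := by
  apply Metric.continuous_iff.mpr
  intro b εp hεp
  refine ⟨Cm * εp, by positivity, ?_⟩
  intro a hab
  rw [Real.dist_eq] at hab ⊢
  have h1 := qle_rEq_bound hτd hd1 hinv a b
  have h2 : Cm * |rEq a - rEq b| < Cm * εp := lt_of_le_of_lt h1 hab
  exact lt_of_mul_lt_mul_left h2 hCm.le

lemma qle_rEq_deriv {tauOf rEq : ℝ → ℝ} {Cm : ℝ} (hCm : 0 < Cm)
    (htau : ContDiff ℝ (⊤ : ℕ∞) tauOf) (hd1 : ∀ y, Cm ≤ deriv tauOf y)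
    (hinv : ∀ τ, tauOf (rEq τ) = τ) (τ : ℝ) :
    HasDerivAt rEq (deriv tauOf (rEq τ))⁻¹ τ := by
  have hne : deriv tauOf (rEq τ) ≠ 0 := ne_of_gt (lt_of_lt_of_le hCm (hd1 _))
  exact (HasStrictDerivAt.of_local_left_inverse
    ((qle_rEq_cont hCm (htau.differentiable (by simp)) hd1 hinv).continuousAt)
    (htau.hasStrictDerivAt (by simp)) hne (Filter.Eventually.of_forall hinv)).hasDerivAt

noncomputable def qleVint (tauOf rEq τext : ℝ → ℝ) (r : ℝ → ℝ → ℝ → ℝ) (ε t x : ℝ) : ℝ :=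
  qleF tauOf (r ε t x) - qleF tauOf (rEq (τext (ε * t)))
    - τext (ε * t) * (r ε t x - rEq (τext (ε * t)))

noncomputable def qleD (tauOf rEq τext : ℝ → ℝ) (r : ℝ → ℝ → ℝ → ℝ) (ε t x : ℝ) : ℝ :=
  (tauOf (r ε t x) - τext (ε * t)) * fderiv ℝ (fun q : ℝ × ℝ => r ε q.1 q.2) (t, x) (1, 0)
    - (ε * deriv τext (ε * t)) * (r ε t x - rEq (τext (ε * t)))

lemma qle_hVint {tauOf rEq τext : ℝ → ℝ} {Cm : ℝ} (hCm : 0 < Cm)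
    (htau : ContDiff ℝ (⊤ : ℕ∞) tauOf) (hd1 : ∀ y, Cm ≤ deriv tauOf y)
    (hinv : ∀ τ, tauOf (rEq τ) = τ) (hτext : ContDiff ℝ (⊤ : ℕ∞) τext)
    {r : ℝ → ℝ → ℝ → ℝ} {ε : ℝ}
    (hsm : ContDiff ℝ (⊤ : ℕ∞) (fun q : ℝ × ℝ => r ε q.1 q.2)) (t x : ℝ) :
    HasDerivAt (fun s => qleVint tauOf rEq τext r ε s x) (qleD tauOf rEq τext r ε t x) t := by
  obtain ⟨hslice, hcontD, hsmx, hsmt⟩ := qle_slice _ hsm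
  have hτc : Continuous tauOf := (htau.differentiable (by simp)).continuous
  have hρ : HasDerivAt (fun s => r ε s x)
      (fderiv ℝ (fun q : ℝ × ℝ => r ε q.1 q.2) (t, x) (1, 0)) t := hslice t x
  have h2 : HasDerivAt (fun s => τext (ε * s)) (ε * deriv τext (ε * t)) t := by
    have := ((hτext.differentiable (by simp) (ε * t)).hasDerivAt).comp t
      ((hasDerivAt_id t).const_mul ε)
    exact this.congr_deriv (by ring)
  have h3 : HasDerivAt (fun s => rEq (τext (ε * s)))
      ((deriv tauOf (rEq (τext (ε * t))))⁻¹ * (ε * deriv τext (ε * t))) t :=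
    (qle_rEq_deriv hCm htau hd1 hinv (τext (ε * t))).comp t h2
  have h4 : HasDerivAt (fun s => qleF tauOf (r ε s x))
      (tauOf (r ε t x) * fderiv ℝ (fun q : ℝ × ℝ => r ε q.1 q.2) (t, x) (1, 0)) t :=
    (qleF_hasDeriv hτc _).comp t hρ
  have h5 : HasDerivAt (fun s => qleF tauOf (rEq (τext (ε * s))))
      (tauOf (rEq (τext (ε * t)))
        * ((deriv tauOf (rEq (τext (ε * t))))⁻¹ * (ε * deriv τext (ε * t)))) t :=
    (qleF_hasDeriv hτc _).comp t h3
  have h6 : HasDerivAt (fun s => τext (ε * s) * (r ε s x - rEq (τext (ε * s))))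
      (ε * deriv τext (ε * t) * (r ε t x - rEq (τext (ε * t)))
        + τext (ε * t) * (fderiv ℝ (fun q : ℝ × ℝ => r ε q.1 q.2) (t, x) (1, 0)
          - (deriv tauOf (rEq (τext (ε * t))))⁻¹ * (ε * deriv τext (ε * t)))) t :=
    h2.mul (hρ.sub h3)
  have htot := (h4.sub h5).sub h6
  have heq : HasDerivAt (fun s => qleVint tauOf rEq τext r ε s x) _ t := htot
  convert heq using 1
  rw [qleD, hinv (τext (ε * t))]
  have hne : deriv tauOf (rEq (τext (ε * t))) ≠ 0 := ne_of_gt (lt_of_lt_of_le hCm (hd1 _))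
  field_simp
  ring
lemma qle_cont_x {tauOf rEq τext : ℝ → ℝ} {Cm : ℝ} (hCm : 0 < Cm)
    (htau : ContDiff ℝ (⊤ : ℕ∞) tauOf) (hd1 : ∀ y, Cm ≤ deriv tauOf y)
    (hinv : ∀ τ, tauOf (rEq τ) = τ) (hτext : ContDiff ℝ (⊤ : ℕ∞) τext)
    {r : ℝ → ℝ → ℝ → ℝ} {ε : ℝ}
    (hsm : ContDiff ℝ (⊤ : ℕ∞) (fun q : ℝ × ℝ => r ε q.1 q.2)) (t : ℝ) :
    Continuous (fun x => qleVint tauOf rEq τext r ε t x) ∧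
      Continuous (fun x => qleD tauOf rEq τext r ε t x) := by
  obtain ⟨hslice, hcontD, hsmx, hsmt⟩ := qle_slice _ hsm
  have hτc : Continuous tauOf := (htau.differentiable (by simp)).continuous
  have hFc : Continuous (qleF tauOf) := by
    have : Differentiable ℝ (qleF tauOf) := fun y => (qleF_hasDeriv hτc y).differentiableAt
    exact this.continuous
  have hrtx : Continuous (fun x => r ε t x) := (hsmx t).continuous
  have hfderx : Continuous (fun x : ℝ =>
      fderiv ℝ (fun q : ℝ × ℝ => r ε q.1 q.2) (t, x) (1, 0)) :=
    hcontD.comp (Continuous.prodMk_right t)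
  constructor
  · exact ((hFc.comp hrtx).sub continuous_const).sub
      (continuous_const.mul (hrtx.sub continuous_const))
  · exact (((hτc.comp hrtx).sub continuous_const).mul hfderx).sub
      (continuous_const.mul (hrtx.sub continuous_const))

lemma qle_cont_joint {tauOf rEq τext : ℝ → ℝ} {Cm : ℝ} (hCm : 0 < Cm)
    (htau : ContDiff ℝ (⊤ : ℕ∞) tauOf) (hd1 : ∀ y, Cm ≤ deriv tauOf y)
    (hinv : ∀ τ, tauOf (rEq τ) = τ) (hτext : ContDiff ℝ (⊤ : ℕ∞) τext)
    {r : ℝ → ℝ → ℝ → ℝ} {ε : ℝ}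
    (hsm : ContDiff ℝ (⊤ : ℕ∞) (fun q : ℝ × ℝ => r ε q.1 q.2)) :
    Continuous (fun q : ℝ × ℝ => qleD tauOf rEq τext r ε q.1 q.2) := by
  obtain ⟨hslice, hcontD, hsmx, hsmt⟩ := qle_slice _ hsm
  have hτc : Continuous tauOf := (htau.differentiable (by simp)).continuous
  have hreqc : Continuous rEq := qle_rEq_cont hCm (htau.differentiable (by simp)) hd1 hinv
  have hτextc : Continuous τext := (hτext.differentiable (by simp)).continuous
  have hrc : Continuous (fun q : ℝ × ℝ => r ε q.1 q.2) := hsm.continuous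
  have hτb : Continuous (fun q : ℝ × ℝ => τext (ε * q.1)) :=
    hτextc.comp (continuous_const.mul continuous_fst)
  have hreq : Continuous (fun q : ℝ × ℝ => rEq (τext (ε * q.1))) := hreqc.comp hτb
  have hτdc : Continuous (deriv τext) := hτext.continuous_deriv (by simp)
  have hfder : Continuous (fun q : ℝ × ℝ =>
      fderiv ℝ (fun q : ℝ × ℝ => r ε q.1 q.2) (q.1, q.2) (1, 0)) := hcontD
  exact (((hτc.comp hrc).sub hτb).mul hfder).sub
    (((continuous_const.mul (hτdc.comp (continuous_const.mul continuous_fst)))).mul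
      (hrc.sub hreq))

lemma qle_hV {tauOf rEq τext : ℝ → ℝ} {Cm : ℝ} (hCm : 0 < Cm)
    (htau : ContDiff ℝ (⊤ : ℕ∞) tauOf) (hd1 : ∀ y, Cm ≤ deriv tauOf y)
    (hinv : ∀ τ, tauOf (rEq τ) = τ) (hτext : ContDiff ℝ (⊤ : ℕ∞) τext)
    {r : ℝ → ℝ → ℝ → ℝ} {ε : ℝ}
    (hsm : ContDiff ℝ (⊤ : ℕ∞) (fun q : ℝ × ℝ => r ε q.1 q.2)) (t0 : ℝ) :
    HasDerivAt (fun t => ∫ x in (0:ℝ)..1, qleVint tauOf rEq τext r ε t x)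
      (∫ x in (0:ℝ)..1, qleD tauOf rEq τext r ε t0 x) t0 := by
  have hDj := qle_cont_joint hCm htau hd1 hinv hτext hsm
  have hVx : ∀ t : ℝ, Continuous fun x => qleVint tauOf rEq τext r ε t x :=
    fun t => (qle_cont_x hCm htau hd1 hinv hτext hsm t).1
  have hDx : Continuous fun x => qleD tauOf rEq τext r ε t0 x :=
    (qle_cont_x hCm htau hd1 hinv hτext hsm t0).2
  have hK : IsCompact ((Set.Icc (t0 - 1) (t0 + 1)) ×ˢ (Set.Icc (0:ℝ) 1)) :=
    isCompact_Icc.prod isCompact_Icc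
  obtain ⟨Cb, hCb⟩ := hK.exists_bound_of_continuousOn hDj.continuousOn
  refine (intervalIntegral.hasDerivAt_integral_of_dominated_loc_of_deriv_le (Metric.ball_mem_nhds t0 one_pos)
    (Filter.Eventually.of_forall fun t => ((hVx t).aestronglyMeasurable))
    ((hVx t0).intervalIntegrable _ _)
    (hDx.aestronglyMeasurable)
    (Filter.Eventually.of_forall ?_)
    (_root_.intervalIntegrable_const (c := Cb))
    (Filter.Eventually.of_forall ?_)).2
  · intro x hx tt htt
    have hxmem : x ∈ Set.Icc (0:ℝ) 1 := by
      rw [Set.uIoc_of_le zero_le_one] at hx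
      exact Set.Ioc_subset_Icc_self hx
    have htmem : tt ∈ Set.Icc (t0 - 1) (t0 + 1) := by
      rw [Real.ball_eq_Ioo] at htt
      exact ⟨htt.1.le, htt.2.le⟩
    exact hCb (tt, x) (Set.mk_mem_prod htmem hxmem)
  · intro x hx tt htt
    exact qle_hVint hCm htau hd1 hinv hτext hsm tt x
set_option maxHeartbeats 1000000 in
lemma qle_dissip {tauOf rEq τext : ℝ → ℝ} {Cm Cp : ℝ} (hCm : 0 < Cm)
    (htau : ContDiff ℝ (⊤ : ℕ∞) tauOf) (hd : ∀ y, Cm ≤ deriv tauOf y ∧ deriv tauOf y ≤ Cp)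
    (hinv : ∀ τ, tauOf (rEq τ) = τ) (hτext : ContDiff ℝ (⊤ : ℕ∞) τext)
    (hτ'bd : ∀ s, |deriv τext s| ≤ 1)
    {r : ℝ → ℝ → ℝ → ℝ} {ε : ℝ} (hε : 0 < ε)
    (hsm : ContDiff ℝ (⊤ : ℕ∞) (fun q : ℝ × ℝ => r ε q.1 q.2)) (t : ℝ)
    (hpdet : ∀ x ∈ Set.Icc (0:ℝ) 1,
      deriv (fun s => r ε s x) t = deriv (deriv (fun y => tauOf (r ε t y))) x)
    (hneut : deriv (fun y => r ε t y) 0 = 0)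
    (hdirt : tauOf (r ε t 1) = τext (ε * t)) :
    (∫ x in (0:ℝ)..1, qleD tauOf rEq τext r ε t x)
      ≤ -(Cm ^ 2 / (2 * Cp) / 2) * (∫ x in (0:ℝ)..1, qleVint tauOf rEq τext r ε t x)
        + (2 * Cp / Cm ^ 3) * ε ^ 2 := by
  have hCmp : Cm ≤ Cp := le_trans (hd 0).1 (hd 0).2
  have hCp : 0 < Cp := lt_of_lt_of_le hCm hCmp
  obtain ⟨hslice, hcontD, hsmx, hsmt⟩ := qle_slice _ hsm
  have hτdiff : Differentiable ℝ tauOf := htau.differentiable (by simp)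
  have hτc : Continuous tauOf := hτdiff.continuous
  -- smoothness of the spatial profile w := fun y => tauOf (r ε t y)
  have hsmw : ContDiff ℝ (⊤ : ℕ∞) (fun y => tauOf (r ε t y)) := htau.comp (hsmx t)
  have hsmw' : ContDiff ℝ ((⊤ : ℕ∞) : WithTop ℕ∞) (fun y => tauOf (r ε t y)) :=
    hsmw.of_le (by simp)
  have hwd : Differentiable ℝ (fun y => tauOf (r ε t y)) := hsmw.differentiable (by simp)
  have hw'sm : ContDiff ℝ ((⊤ : ℕ∞) : WithTop ℕ∞) (deriv fun y => tauOf (r ε t y)) :=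
    (contDiff_infty_iff_deriv.mp hsmw').2
  have hw'd : Differentiable ℝ (deriv fun y => tauOf (r ε t y)) := hw'sm.differentiable (by simp)
  have hw'c : Continuous (deriv fun y => tauOf (r ε t y)) := hw'd.continuous
  have hw''c : Continuous (deriv (deriv fun y => tauOf (r ε t y))) :=
    ((contDiff_infty_iff_deriv.mp hw'sm).2.differentiable (by simp)).continuous
  have hrtc : Continuous (fun x => r ε t x) := (hsmx t).continuous
  have hwc : Continuous (fun x => tauOf (r ε t x)) := hsmw.continuous
  have hyc : Continuous (fun x => r ε t x - rEq (τext (ε * t))) := hrtc.sub continuous_const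
  -- named scalar quantities
  set τd := deriv τext (ε * t) with hτd
  set Q := ∫ x in (0:ℝ)..1, (r ε t x - rEq (τext (ε * t))) ^ 2 with hQ
  set V := ∫ x in (0:ℝ)..1, qleVint tauOf rEq τext r ε t x with hV
  set A := ∫ x in (0:ℝ)..1, (tauOf (r ε t x) - τext (ε * t)) ^ 2 with hA
  set B := ∫ x in (0:ℝ)..1, (deriv (fun y => tauOf (r ε t y)) x) ^ 2 with hB
  set L := ∫ x in (0:ℝ)..1, |r ε t x - rEq (τext (ε * t))| with hL
  set I1 := ∫ x in (0:ℝ)..1, (r ε t x - rEq (τext (ε * t))) with hI1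
  have hQnn : 0 ≤ Q := by
    rw [hQ]; apply intervalIntegral.integral_nonneg zero_le_one; intro x _; positivity
  -- Step 1 : rewrite the integrand using the PDE
  have hstep1 : (∫ x in (0:ℝ)..1, qleD tauOf rEq τext r ε t x)
      = (∫ x in (0:ℝ)..1, ((tauOf (r ε t x) - τext (ε * t))
          * deriv (deriv (fun y => tauOf (r ε t y))) x)) - (ε * τd) * I1 := by
    have hcongr : (∫ x in (0:ℝ)..1, qleD tauOf rEq τext r ε t x)
        = ∫ x in (0:ℝ)..1, ((tauOf (r ε t x) - τext (ε * t))
            * deriv (deriv (fun y => tauOf (r ε t y))) x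
            - (ε * τd) * (r ε t x - rEq (τext (ε * t)))) := by
      apply intervalIntegral.integral_congr
      intro x hx
      rw [Set.uIcc_of_le zero_le_one] at hx
      show qleD tauOf rEq τext r ε t x = _
      rw [qleD]
      have hfd : fderiv ℝ (fun q : ℝ × ℝ => r ε q.1 q.2) (t, x) (1, 0)
          = deriv (deriv (fun y => tauOf (r ε t y))) x := by
        rw [← hpdet x hx]
        exact ((hslice t x).deriv).symm
      rw [hfd, hτd]
    rw [hcongr, intervalIntegral.integral_sub
      (f := fun x => (tauOf (r ε t x) - τext (ε * t)) * deriv (deriv (fun y => tauOf (r ε t y))) x)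
      (g := fun x => (ε * τd) * (r ε t x - rEq (τext (ε * t))))
      (((hwc.sub continuous_const).mul hw''c).intervalIntegrable _ _)
      ((continuous_const.mul hyc).intervalIntegrable _ _),
      intervalIntegral.integral_const_mul]
  -- Step 2 : integration by parts
  have hibp : (∫ x in (0:ℝ)..1, ((tauOf (r ε t x) - τext (ε * t))
      * deriv (deriv (fun y => tauOf (r ε t y))) x)) = -B := by
    have hu : ∀ x ∈ Set.uIcc (0:ℝ) 1, HasDerivAt (fun x => tauOf (r ε t x) - τext (ε * t))
        (deriv (fun y => tauOf (r ε t y)) x) x := by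
      intro x _
      exact ((hwd x).hasDerivAt).sub_const _
    have hv : ∀ x ∈ Set.uIcc (0:ℝ) 1, HasDerivAt (deriv fun y => tauOf (r ε t y))
        (deriv (deriv fun y => tauOf (r ε t y)) x) x := fun x _ => (hw'd x).hasDerivAt
    have := intervalIntegral.integral_mul_deriv_eq_deriv_mul hu hv
      (hw'c.intervalIntegrable _ _) (hw''c.intervalIntegrable _ _)
    have hu1 : tauOf (r ε t 1) - τext (ε * t) = 0 := by rw [hdirt]; ring
    have hv0 : deriv (fun y => tauOf (r ε t y)) 0 = 0 := by
      have hyx : HasDerivAt (fun y => r ε t y) (deriv (fun y => r ε t y) 0) 0 :=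
        ((hsmx t).differentiable (by simp) 0).hasDerivAt
      have hcomp := (hτdiff (r ε t 0)).hasDerivAt.comp 0 hyx
      rw [hneut, mul_zero] at hcomp
      exact hcomp.deriv
    rw [hu1, hv0] at this
    rw [this]
    have : (∫ x in (0:ℝ)..1, deriv (fun y => tauOf (r ε t y)) x
        * deriv (fun y => tauOf (r ε t y)) x) = B := by
      rw [hB]
      apply intervalIntegral.integral_congr
      intro x _
      ring
    rw [this]
    ring
  -- Step 3 : Poincaré
  have hpoin : A ≤ 4 * B := by
    have hdg : deriv (fun x => tauOf (r ε t x) - τext (ε * t))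
        = deriv (fun y => tauOf (r ε t y)) := by
      funext x
      exact deriv_sub_const _
    have := qle_poincare (g := fun x => tauOf (r ε t x) - τext (ε * t))
      (hwd.sub_const _) (by rw [hdg]; exact hw'c)
      (by show tauOf (r ε t 1) - τext (ε * t) = 0; rw [hdirt]; ring)
    rw [hdg] at this
    exact this
  -- Step 4 : A dominates Q
  have hAQ : Cm ^ 2 * Q ≤ A := by
    rw [hA, hQ, ← intervalIntegral.integral_const_mul]
    apply intervalIntegral.integral_mono_on zero_le_one
      ((continuous_const.mul (hyc.pow 2)).intervalIntegrable _ _)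
      (((hwc.sub continuous_const).pow 2).intervalIntegrable _ _)
    intro x _
    show Cm ^ 2 * (r ε t x - rEq (τext (ε * t))) ^ 2 ≤ (tauOf (r ε t x) - τext (ε * t)) ^ 2
    have hτb : tauOf (rEq (τext (ε * t))) = τext (ε * t) := hinv _
    rcases le_total (rEq (τext (ε * t))) (r ε t x) with h | h
    · have h1 := qle_mvt_lower hτdiff (fun y => (hd y).1) h
      rw [hτb] at h1
      have h2 := mul_self_le_mul_self (mul_nonneg hCm.le (sub_nonneg.mpr h)) h1
      nlinarith [h2]
    · have h1 := qle_mvt_lower hτdiff (fun y => (hd y).1) h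
      rw [hτb] at h1
      have h2 := mul_self_le_mul_self (mul_nonneg hCm.le (sub_nonneg.mpr h)) h1
      nlinarith [h2]
  -- Step 5 : sandwich between V and Q
  have hsand : ∀ x : ℝ, Cm / 2 * (r ε t x - rEq (τext (ε * t))) ^ 2
      ≤ qleVint tauOf rEq τext r ε t x ∧
      qleVint tauOf rEq τext r ε t x ≤ Cp / 2 * (r ε t x - rEq (τext (ε * t))) ^ 2 := by
    intro x
    have hqs := qle_sandwich hτdiff hd (rEq (τext (ε * t))) (r ε t x)
    have hFs := qleF_sub hτc (rEq (τext (ε * t))) (r ε t x)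
    rw [hinv] at hFs
    have hVx : qleVint tauOf rEq τext r ε t x
        = ∫ s in (rEq (τext (ε * t)))..(r ε t x), (tauOf s - tauOf (rEq (τext (ε * t)))) := by
      rw [qleVint, hFs, hinv]
    constructor
    · rw [hVx]; exact hqs.1
    · rw [hVx]; exact hqs.2
  have hVQ1 : Cm / 2 * Q ≤ V := by
    rw [hV, hQ, ← intervalIntegral.integral_const_mul]
    apply intervalIntegral.integral_mono_on zero_le_one
      ((continuous_const.mul (hyc.pow 2)).intervalIntegrable _ _)
      ((qle_cont_x hCm htau (fun y => (hd y).1) hinv hτext hsm t).1.intervalIntegrable _ _)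
    intro x _
    exact (hsand x).1
  have hVQ2 : V ≤ Cp / 2 * Q := by
    rw [hV, hQ, ← intervalIntegral.integral_const_mul]
    apply intervalIntegral.integral_mono_on zero_le_one
      ((qle_cont_x hCm htau (fun y => (hd y).1) hinv hτext hsm t).1.intervalIntegrable _ _)
      ((continuous_const.mul (hyc.pow 2)).intervalIntegrable _ _)
    intro x _
    exact (hsand x).2
  -- Step 6 : drift term bound
  have habs1 : |I1| ≤ L := by
    rw [hI1, hL]
    exact intervalIntegral.abs_integral_le_integral_abs zero_le_one
  have hLnn : 0 ≤ L := by
    rw [hL]; apply intervalIntegral.integral_nonneg zero_le_one; intro x _; positivity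
  have hdrift : -((ε * τd) * I1) ≤ ε * L := by
    calc -((ε * τd) * I1) ≤ |(ε * τd) * I1| := neg_le_abs _
      _ = ε * (|τd| * |I1|) := by rw [abs_mul, abs_mul, abs_of_pos hε]; ring
      _ ≤ ε * (1 * L) := by
          apply mul_le_mul_of_nonneg_left _ hε.le
          exact mul_le_mul (hτ'bd _) habs1 (abs_nonneg _) zero_le_one
      _ = ε * L := by ring
  have hyoung : ε * L ≤ Cm ^ 3 / (8 * Cp) * Q + 2 * Cp / Cm ^ 3 * ε ^ 2 := by
    have hptw : ∀ x ∈ Set.Icc (0:ℝ) 1, ε * |r ε t x - rEq (τext (ε * t))|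
        ≤ Cm ^ 3 / (8 * Cp) * (r ε t x - rEq (τext (ε * t))) ^ 2
          + 2 * Cp / Cm ^ 3 * ε ^ 2 := by
      intro x _
      set y := r ε t x - rEq (τext (ε * t))
      rw [div_mul_eq_mul_div, div_mul_eq_mul_div, div_add_div _ _ (by positivity) (by positivity),
        le_div_iff₀ (by positivity : (0:ℝ) < 8 * Cp * Cm ^ 3)]
      rcases abs_cases y with ⟨hy, _⟩ | ⟨hy, _⟩ <;> rw [hy] <;>
        nlinarith [sq_nonneg (Cm ^ 3 * y - 4 * Cp * ε), sq_nonneg (Cm ^ 3 * y + 4 * Cp * ε)]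
    have hmono := intervalIntegral.integral_mono_on zero_le_one
      ((continuous_const.mul hyc.abs).intervalIntegrable (μ := volume) 0 1)
      (((continuous_const.mul (hyc.pow 2)).add continuous_const).intervalIntegrable (μ := volume) 0 1) hptw
    simp only [Pi.mul_apply, Pi.add_apply, Pi.pow_apply] at hmono
    rw [intervalIntegral.integral_const_mul] at hmono
    rw [intervalIntegral.integral_add
      (f := fun u => Cm ^ 3 / (8 * Cp) * (r ε t u - rEq (τext (ε * t))) ^ 2)
      ((continuous_const.mul (hyc.pow 2)).intervalIntegrable (μ := volume) 0 1)
      (_root_.intervalIntegrable_const)] at hmono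
    rw [intervalIntegral.integral_const_mul, intervalIntegral.integral_const] at hmono
    simp only [smul_eq_mul, sub_zero, one_mul] at hmono
    rw [hL, hQ]
    convert hmono using 2
  -- assemble
  rw [hstep1, hibp]
  have hfin1 : -B ≤ -(A / 4) := by linarith
  have hfin2 : -(A / 4) ≤ -(Cm ^ 2 / 4) * Q := by linarith
  have e1 : -B - ε * τd * I1 ≤ -(Cm ^ 2 / 4) * Q + ε * L := by linarith
  have s1 : Cm ^ 3 / (8 * Cp) * Q ≤ Cm ^ 2 / 8 * Q := by
    apply mul_le_mul_of_nonneg_right _ hQnn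
    rw [div_le_div_iff₀ (by positivity) (by norm_num)]
    nlinarith
  have s2 : Cm ^ 2 / (4 * Cp) * V ≤ Cm ^ 2 / 8 * Q := by
    have h := mul_le_mul_of_nonneg_left hVQ2
      (by positivity : (0:ℝ) ≤ Cm ^ 2 / (4 * Cp))
    have heq : Cm ^ 2 / (4 * Cp) * (Cp / 2 * Q) = Cm ^ 2 / 8 * Q := by
      field_simp
      ring
    rw [heq] at h
    exact h
  have hKeq : -(Cm ^ 2 / (2 * Cp) / 2) * V = -(Cm ^ 2 / (4 * Cp) * V) := by ring
  rw [hKeq]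
  linarith [e1, hyoung, s1, s2]
lemma qle_V0 {tauOf rEq τext : ℝ → ℝ} {r : ℝ → ℝ → ℝ → ℝ} {ε : ℝ}
    (hinit' : ∀ x ∈ Set.Icc (0:ℝ) 1, r ε 0 x = rEq (τext 0)) :
    (∫ x in (0:ℝ)..1, qleVint tauOf rEq τext r ε 0 x) = 0 := by
  have heq : Set.EqOn (fun x => qleVint tauOf rEq τext r ε 0 x) (fun _ => (0:ℝ))
      (Set.uIcc (0:ℝ) 1) := by
    intro x hx
    rw [Set.uIcc_of_le zero_le_one] at hx
    show qleVint tauOf rEq τext r ε 0 x = 0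
    rw [qleVint, mul_zero, hinit' x hx]
    ring
  rw [intervalIntegral.integral_congr heq]
  simp

lemma qle_VQlower {tauOf rEq τext : ℝ → ℝ} {Cm Cp : ℝ} (hCm : 0 < Cm)
    (htau : ContDiff ℝ (⊤ : ℕ∞) tauOf) (hd : ∀ y, Cm ≤ deriv tauOf y ∧ deriv tauOf y ≤ Cp)
    (hinv : ∀ τ, tauOf (rEq τ) = τ) (hτext : ContDiff ℝ (⊤ : ℕ∞) τext)
    {r : ℝ → ℝ → ℝ → ℝ} {ε : ℝ}
    (hsm : ContDiff ℝ (⊤ : ℕ∞) (fun q : ℝ × ℝ => r ε q.1 q.2)) (t : ℝ) :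
    Cm / 2 * (∫ x in (0:ℝ)..1, (r ε t x - rEq (τext (ε * t))) ^ 2)
      ≤ ∫ x in (0:ℝ)..1, qleVint tauOf rEq τext r ε t x := by
  obtain ⟨hslice, hcontD, hsmx, hsmt⟩ := qle_slice _ hsm
  have hτdiff : Differentiable ℝ tauOf := htau.differentiable (by simp)
  have hτc : Continuous tauOf := hτdiff.continuous
  have hrtc : Continuous (fun x => r ε t x) := (hsmx t).continuous
  have hyc : Continuous (fun x => r ε t x - rEq (τext (ε * t))) := hrtc.sub continuous_const
  have hsand : ∀ x : ℝ, Cm / 2 * (r ε t x - rEq (τext (ε * t))) ^ 2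
      ≤ qleVint tauOf rEq τext r ε t x := by
    intro x
    have hqs := qle_sandwich hτdiff hd (rEq (τext (ε * t))) (r ε t x)
    have hFs := qleF_sub hτc (rEq (τext (ε * t))) (r ε t x)
    rw [hinv] at hFs
    have hVx : qleVint tauOf rEq τext r ε t x
        = ∫ s in (rEq (τext (ε * t)))..(r ε t x), (tauOf s - tauOf (rEq (τext (ε * t)))) := by
      rw [qleVint, hFs, hinv]
    rw [hVx]
    exact hqs.1
  rw [← intervalIntegral.integral_const_mul]
  apply intervalIntegral.integral_mono_on zero_le_one
    ((continuous_const.mul (hyc.pow 2)).intervalIntegrable _ _)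
    ((qle_cont_x hCm htau (fun y => (hd y).1) hinv hτext hsm t).1.intervalIntegrable _ _)
  intro x _
  exact hsand x

set_option maxHeartbeats 1000000 in
lemma qle_main {tauOf rEq τext : ℝ → ℝ} {Cm Cp : ℝ} (hCm : 0 < Cm)
    (htau : ContDiff ℝ (⊤ : ℕ∞) tauOf) (hd : ∀ y, Cm ≤ deriv tauOf y ∧ deriv tauOf y ≤ Cp)
    (hinv : ∀ τ, tauOf (rEq τ) = τ) (hτext : ContDiff ℝ (⊤ : ℕ∞) τext)
    (hτ'bd : ∀ s, |deriv τext s| ≤ 1)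
    {r : ℝ → ℝ → ℝ → ℝ} {ε : ℝ} (hε : 0 < ε)
    (hsm : ContDiff ℝ (⊤ : ℕ∞) (fun q : ℝ × ℝ => r ε q.1 q.2))
    (hpde' : ∀ t ≥ (0:ℝ), ∀ x ∈ Set.Icc (0:ℝ) 1,
      deriv (fun s => r ε s x) t = deriv (deriv (fun y => tauOf (r ε t y))) x)
    (hneu' : ∀ t ≥ (0:ℝ), deriv (fun y => r ε t y) 0 = 0)
    (hdir' : ∀ t ≥ (0:ℝ), tauOf (r ε t 1) = τext (ε * t))
    (hinit' : ∀ x ∈ Set.Icc (0:ℝ) 1, r ε 0 x = rEq (τext 0))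
    (t : ℝ) (ht : 0 ≤ t) :
    (∫ x in (0:ℝ)..1, (r ε t x - rEq (τext (ε * t))) ^ 2)
      ≤ 16 * Cp ^ 2 / Cm ^ 6 * ε ^ 2 := by
  have hCmp : Cm ≤ Cp := le_trans (hd 0).1 (hd 0).2
  have hCp : 0 < Cp := lt_of_lt_of_le hCm hCmp
  have hd1 : ∀ y, Cm ≤ deriv tauOf y := fun y => (hd y).1
  set a := Cm ^ 2 / (4 * Cp) with ha
  set M := 8 * Cp ^ 2 / Cm ^ 5 * ε ^ 2 with hM
  have haM : a * M = 2 * Cp / Cm ^ 3 * ε ^ 2 := by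
    rw [ha, hM]
    field_simp
    ring
  have hapos : 0 < a := by rw [ha]; positivity
  have hMpos : 0 < M := by rw [hM]; positivity
  -- the Lyapunov function
  have hφd : ∀ s : ℝ, HasDerivAt
      (fun s => Real.exp (a * s) * ((∫ x in (0:ℝ)..1, qleVint tauOf rEq τext r ε s x) - M))
      (a * Real.exp (a * s) * ((∫ x in (0:ℝ)..1, qleVint tauOf rEq τext r ε s x) - M)
        + Real.exp (a * s) * (∫ x in (0:ℝ)..1, qleD tauOf rEq τext r ε s x)) s := by
    intro s
    have hexp : HasDerivAt (fun s : ℝ => Real.exp (a * s)) (a * Real.exp (a * s)) s := by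
      have h1 : HasDerivAt (fun s : ℝ => a * s) a s := by
        simpa using (hasDerivAt_id s).const_mul a
      have h2 := (Real.hasDerivAt_exp (a * s)).comp s h1
      have h3 : HasDerivAt (fun s : ℝ => Real.exp (a * s)) (Real.exp (a * s) * a) s := h2
      rw [mul_comm] at h3
      exact h3
    have hVd := qle_hV hCm htau hd1 hinv hτext hsm s
    exact hexp.mul (hVd.sub_const M)
  have hanti : AntitoneOn
      (fun s => Real.exp (a * s) * ((∫ x in (0:ℝ)..1, qleVint tauOf rEq τext r ε s x) - M))
      (Set.Icc 0 t) := by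
    apply antitoneOn_of_deriv_nonpos (convex_Icc 0 t)
    · exact (fun s _ => ((hφd s).differentiableAt.continuousAt.continuousWithinAt))
    · intro s _
      exact (hφd s).differentiableAt.differentiableWithinAt
    · intro s hs
      rw [interior_Icc] at hs
      have hs0 : (0:ℝ) ≤ s := hs.1.le
      rw [(hφd s).deriv]
      have hdis := qle_dissip hCm htau hd hinv hτext hτ'bd hε hsm s
        (hpde' s hs0) (hneu' s hs0) (hdir' s hs0)
      have hVQ := qle_VQlower hCm htau hd hinv hτext hsm s
      have hQnn : 0 ≤ ∫ x in (0:ℝ)..1, (r ε s x - rEq (τext (ε * s))) ^ 2 := by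
        apply intervalIntegral.integral_nonneg zero_le_one; intro x _; positivity
      have hVnn : 0 ≤ ∫ x in (0:ℝ)..1, qleVint tauOf rEq τext r ε s x := by
        calc (0:ℝ) ≤ Cm / 2 * ∫ x in (0:ℝ)..1, (r ε s x - rEq (τext (ε * s))) ^ 2 := by positivity
          _ ≤ _ := hVQ
      have hcoef : -(Cm ^ 2 / (2 * Cp) / 2) = -a := by rw [ha]; ring
      rw [hcoef] at hdis
      have hexp_pos := Real.exp_pos (a * s)
      nlinarith [hdis, hexp_pos, mul_le_mul_of_nonneg_left hdis hexp_pos.le]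
  have hmem0 : (0:ℝ) ∈ Set.Icc (0:ℝ) t := ⟨le_refl 0, ht⟩
  have hmemt : t ∈ Set.Icc (0:ℝ) t := ⟨ht, le_refl t⟩
  have hφle : Real.exp (a * t) * ((∫ x in (0:ℝ)..1, qleVint tauOf rEq τext r ε t x) - M)
      ≤ Real.exp (a * 0) * ((∫ x in (0:ℝ)..1, qleVint tauOf rEq τext r ε 0 x) - M) :=
    hanti hmem0 hmemt ht
  have hφ0 : Real.exp (a * 0) * ((∫ x in (0:ℝ)..1, qleVint tauOf rEq τext r ε 0 x) - M)
      = -M := by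
    rw [qle_V0 (tauOf := tauOf) hinit']
    simp
  rw [hφ0] at hφle
  -- conclude V t ≤ M
  have hVt : (∫ x in (0:ℝ)..1, qleVint tauOf rEq τext r ε t x) ≤ M := by
    have hexp_pos := Real.exp_pos (a * t)
    nlinarith [hφle, hexp_pos, hMpos]
  have hVQ := qle_VQlower hCm htau hd hinv hτext hsm t
  have hgoal : Cm / 2 * (∫ x in (0:ℝ)..1, (r ε t x - rEq (τext (ε * t))) ^ 2) ≤ M :=
    le_trans hVQ hVt
  rw [hM] at hgoal
  rw [show (16:ℝ) * Cp ^ 2 / Cm ^ 6 * ε ^ 2 = (2 / Cm) * (8 * Cp ^ 2 / Cm ^ 5 * ε ^ 2) by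
    field_simp; ring]
  have h2Cm : (0:ℝ) < 2 / Cm := by positivity
  have hfin := mul_le_mul_of_nonneg_left hgoal h2Cm.le
  have heq : 2 / Cm * (Cm / 2 * ∫ x in (0:ℝ)..1, (r ε t x - rEq (τext (ε * t))) ^ 2)
      = ∫ x in (0:ℝ)..1, (r ε t x - rEq (τext (ε * t))) ^ 2 := by
    field_simp
  rw [heq] at hfin
  exact hfin

/-- In the quasistatic regime (slowly driven diffusion with boundary tension
`τ̃(εt)`, γ = 1), the solution stays close to local equilibrium:
`∫₀¹ (r_ε(t,x) - 𝔯(τ̃(εt)))² dx → 0` as `ε → 0`, uniformly over times `t` with `εt ≥ t₁`. -/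
theorem quasistatic_local_equilibrium
    (tauOf rEq : ℝ → ℝ) (Cm Cp : ℝ) (hCm : 0 < Cm)
    (htau : ContDiff ℝ (⊤ : ℕ∞) tauOf)
    (hd : ∀ y : ℝ, Cm ≤ deriv tauOf y ∧ deriv tauOf y ≤ Cp)
    (hinv : ∀ τ : ℝ, tauOf (rEq τ) = τ) (hinv' : ∀ y : ℝ, rEq (tauOf y) = y)
    (τext : ℝ → ℝ) (t₁ : ℝ) (ht₁ : 0 < t₁) (hτext : ContDiff ℝ (⊤ : ℕ∞) τext)
    (hτ' : ∀ t : ℝ, |deriv τext t| ≤ 1)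
    (hτconst : ∀ t ≥ t₁, deriv τext t = 0)
    (r : ℝ → ℝ → ℝ → ℝ)
    (hsmooth : ∀ ε > (0:ℝ), ContDiff ℝ (⊤ : ℕ∞) (fun q : ℝ × ℝ => r ε q.1 q.2))
    (hpde : ∀ ε > (0:ℝ), ∀ t ≥ (0:ℝ), ∀ x ∈ Set.Icc (0:ℝ) 1,
      deriv (fun s => r ε s x) t = deriv (deriv (fun y => tauOf (r ε t y))) x)
    (hneu : ∀ ε > (0:ℝ), ∀ t ≥ (0:ℝ), deriv (fun y => r ε t y) 0 = 0)
    (hdir : ∀ ε > (0:ℝ), ∀ t ≥ (0:ℝ), tauOf (r ε t 1) = τext (ε * t))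
    (hinit : ∀ ε > (0:ℝ), ∀ x ∈ Set.Icc (0:ℝ) 1, r ε 0 x = rEq (τext 0)) :
    ∀ δ > (0:ℝ), ∃ ε₀ > (0:ℝ), ∀ ε ∈ Set.Ioo (0:ℝ) ε₀, ∀ t : ℝ, t₁ ≤ ε * t →
      (∫ x in (0:ℝ)..1, (r ε t x - rEq (τext (ε * t))) ^ 2) < δ := by
  intro δ hδ
  have hCmp : Cm ≤ Cp := le_trans (hd 0).1 (hd 0).2
  have hCp : 0 < Cp := lt_of_lt_of_le hCm hCmp
  refine ⟨Real.sqrt (δ * Cm ^ 6 / (32 * Cp ^ 2)), by positivity, ?_⟩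
  intro ε hε t htt
  have hε0 : 0 < ε := hε.1
  have htpos : 0 ≤ t := by
    by_contra h'
    push_neg at h'
    have := mul_neg_of_pos_of_neg hε0 h'
    linarith [lt_of_lt_of_le ht₁ htt]
  have hmain := qle_main hCm htau hd hinv hτext hτ' hε0 (hsmooth ε hε0)
    (fun s hs x hx => hpde ε hε0 s hs x hx) (fun s hs => hneu ε hε0 s hs)
    (fun s hs => hdir ε hε0 s hs) (fun x hx => hinit ε hε0 x hx) t htpos
  have hsq : ε ^ 2 < δ * Cm ^ 6 / (32 * Cp ^ 2) := by
    have h1 : ε < Real.sqrt (δ * Cm ^ 6 / (32 * Cp ^ 2)) := hε.2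
    have h2 : (Real.sqrt (δ * Cm ^ 6 / (32 * Cp ^ 2))) ^ 2 = δ * Cm ^ 6 / (32 * Cp ^ 2) :=
      Real.sq_sqrt (by positivity)
    calc ε ^ 2 < (Real.sqrt (δ * Cm ^ 6 / (32 * Cp ^ 2))) ^ 2 := by
          exact pow_lt_pow_left₀ h1 hε0.le (by norm_num)
      _ = _ := h2
  calc (∫ x in (0:ℝ)..1, (r ε t x - rEq (τext (ε * t))) ^ 2)
      ≤ 16 * Cp ^ 2 / Cm ^ 6 * ε ^ 2 := hmain
    _ < 16 * Cp ^ 2 / Cm ^ 6 * (δ * Cm ^ 6 / (32 * Cp ^ 2)) := by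
        exact mul_lt_mul_of_pos_left hsq (by positivity)
    _ = δ / 2 := by field_simp; ring
    _ < δ := by linarith
end

section
/- Entropy production at the quasistatic level: combining the free energy balance with the first law Q = ΔU - W and U = F + β⁻¹S, the exchanged heat satisfies Q = β⁻¹(S₁ - S₀) - γ⁻¹ ∫₀^∞ ∫₀¹ (∂_x 𝛕(r(t,x)))² dx dt; in particular Q ≤ β⁻¹(S₁ - S₀), with equality if and only if ∂_x 𝛕(r(t,x)) = 0 for a.e. (t,x). -/
open Real MeasureTheory Filter Set

/-! With `U = F + β⁻¹S`, the first law `Q = ΔU - W` and the free-energy balance combine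
linearly into `Q = β⁻¹ ΔS - γ⁻¹ D`, where `D` is the integrated squared tension gradient.
Since `D ≥ 0` and `γ > 0`, `Q ≤ β⁻¹ ΔS`, with equality iff `D = 0`, i.e. iff the
nonnegative integrand vanishes almost everywhere. -/

theorem heat_eq_entropy_change_sub_dissipation {R : Type*} [CommRing R]
    (β' F₀ F₁ U₀ U₁ S₀ S₁ W Q D : R)
    (hU₀ : U₀ = F₀ + β' * S₀) (hU₁ : U₁ = F₁ + β' * S₁)
    (hQ : Q = (U₁ - U₀) - W) (hbal : F₁ - F₀ = W - D) :
    Q = β' * (S₁ - S₀) - D := by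
  rw [hQ, hU₀, hU₁]
  linear_combination hbal

theorem MeasureTheory.integral_sq_eq_zero_iff {α : Type*} [MeasurableSpace α] {μ : Measure α}
    {f : α → ℝ} (hf : Integrable (fun x => f x ^ 2) μ) :
    ∫ x, f x ^ 2 ∂μ = 0 ↔ ∀ᵐ x ∂μ, f x = 0 := by
  rw [integral_eq_zero_iff_of_nonneg (fun x => sq_nonneg (f x)) hf]
  exact eventually_congr (.of_forall fun x => by simp)

theorem entropy_production_general
    (β γ : ℝ) (hγ : 0 < γ)
    (tauOf : ℝ → ℝ) (r : ℝ → ℝ → ℝ)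
    (F₀ F₁ U₀ U₁ S₀ S₁ W Q : ℝ)
    (hU0 : U₀ = F₀ + β⁻¹ * S₀) (hU1 : U₁ = F₁ + β⁻¹ * S₁)
    (hQ : Q = (U₁ - U₀) - W)
    (hDint : Integrable
      (fun p : ℝ × ℝ => (deriv (fun y => tauOf (r p.1 y)) p.2) ^ 2)
      (volume.restrict ((Set.Ioi (0:ℝ)) ×ˢ (Set.Ioo (0:ℝ) 1))))
    (hbal : F₁ - F₀ = W - γ⁻¹ *
      ∫ p in (Set.Ioi (0:ℝ)) ×ˢ (Set.Ioo (0:ℝ) 1),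
        (deriv (fun y => tauOf (r p.1 y)) p.2) ^ 2) :
    (Q = β⁻¹ * (S₁ - S₀) - γ⁻¹ *
        ∫ p in (Set.Ioi (0:ℝ)) ×ˢ (Set.Ioo (0:ℝ) 1),
          (deriv (fun y => tauOf (r p.1 y)) p.2) ^ 2) ∧
    Q ≤ β⁻¹ * (S₁ - S₀) ∧
    (Q = β⁻¹ * (S₁ - S₀) ↔
      (∀ᵐ p ∂(volume.restrict ((Set.Ioi (0:ℝ)) ×ˢ (Set.Ioo (0:ℝ) 1))),
        deriv (fun y => tauOf (r p.1 y)) p.2 = 0)) := by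
  set D := ∫ p in (Set.Ioi (0:ℝ)) ×ˢ (Set.Ioo (0:ℝ) 1),
    (deriv (fun y => tauOf (r p.1 y)) p.2) ^ 2
  have hheat : Q = β⁻¹ * (S₁ - S₀) - γ⁻¹ * D :=
    heat_eq_entropy_change_sub_dissipation _ F₀ F₁ U₀ U₁ S₀ S₁ W Q _ hU0 hU1 hQ hbal
  have hdiss : 0 ≤ γ⁻¹ * D :=
    mul_nonneg (inv_nonneg.2 hγ.le) (integral_nonneg fun _ => sq_nonneg _)
  refine ⟨hheat, by linarith, ?_⟩
  rw [← integral_sq_eq_zero_iff hDint, hheat, sub_eq_self, mul_eq_zero,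
    or_iff_right (inv_ne_zero hγ.ne')]

/-- Entropy production: with `Q = ΔU - W`, `U = F + β⁻¹S`, and the
free-energy balance `F₁ - F₀ = W - γ⁻¹∫₀^∞∫₀¹(∂_x𝛕(r(t,x)))² dx dt`, the heat satisfies
`Q = β⁻¹(S₁ - S₀) - γ⁻¹∫₀^∞∫₀¹(∂_x𝛕(r(t,x)))² dx dt`; in particular `Q ≤ β⁻¹(S₁ - S₀)`,
with equality iff `∂_x𝛕(r(t,x)) = 0` for a.e. `(t,x) ∈ (0,∞)×(0,1)`. -/
theorem entropy_production
    (β γ : ℝ) (hβ : 0 < β) (hγ : 0 < γ)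
    (tauOf : ℝ → ℝ) (r : ℝ → ℝ → ℝ)
    (F₀ F₁ U₀ U₁ S₀ S₁ W Q : ℝ)
    (hU0 : U₀ = F₀ + β⁻¹ * S₀) (hU1 : U₁ = F₁ + β⁻¹ * S₁)
    (hQ : Q = (U₁ - U₀) - W)
    (hDint : Integrable
      (fun p : ℝ × ℝ => (deriv (fun y => tauOf (r p.1 y)) p.2) ^ 2)
      (volume.restrict ((Set.Ioi (0:ℝ)) ×ˢ (Set.Ioo (0:ℝ) 1))))
    (hbal : F₁ - F₀ = W - γ⁻¹ *
      ∫ p in (Set.Ioi (0:ℝ)) ×ˢ (Set.Ioo (0:ℝ) 1),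
        (deriv (fun y => tauOf (r p.1 y)) p.2) ^ 2) :
    (Q = β⁻¹ * (S₁ - S₀) - γ⁻¹ *
        ∫ p in (Set.Ioi (0:ℝ)) ×ˢ (Set.Ioo (0:ℝ) 1),
          (deriv (fun y => tauOf (r p.1 y)) p.2) ^ 2) ∧
    Q ≤ β⁻¹ * (S₁ - S₀) ∧
    (Q = β⁻¹ * (S₁ - S₀) ↔
      (∀ᵐ p ∂(volume.restrict ((Set.Ioi (0:ℝ)) ×ˢ (Set.Ioo (0:ℝ) 1))),
        deriv (fun y => tauOf (r p.1 y)) p.2 = 0)) :=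
  entropy_production_general β γ hγ tauOf r F₀ F₁ U₀ U₁ S₀ S₁ W Q hU0 hU1 hQ hDint hbal
end
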